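/- arXiv:2507.07150 — 4 statements merged into one kernel-verified Lean document; each statement's English description precedes it below -/
import Mathlib

section
/- If P is uniform on the set of nondecreasing sequences in {0,...,n}^m, then for any threshold ℓ ∈ {0,...,n} and k ∈ {0,...,m}, the probability that exactly k of the coordinates P(1),...,P(m) are ≥ ℓ equals binomial(ℓ-1+m-k, m-k) * binomial(n-ℓ+k, k) / binomial(n+m, m). -/
/-!
A monotone tuple in `{0, …, n}` with exactly `k` entries `≥ ℓ` is the concatenation of a monotone
`(m - k)`-tuple in `[0, ℓ)` and a monotone `k`-tuple in `[ℓ, n]`. Monotone `d`-tuples in a chain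
with `c` elements are the multisets of size `d` on it, counted by stars and bars as
`multichoose c d = (c + d - 1).choose d`; with `c = ℓ` this is also right for `ℓ = 0`.
-/

open MeasureTheory

noncomputable instance (n m : ℕ) : Fintype {f : Fin m → Fin (n + 1) // Monotone f} :=
  Fintype.ofFinite _

instance (n m : ℕ) : Nonempty {f : Fin m → Fin (n + 1) // Monotone f} :=
  ⟨⟨fun _ => 0, monotone_const⟩⟩

open Finset

theorem Nat.card_monotone_fin_eq_multichoose (α : Type*) [LinearOrder α] [Fintype α] (m : ℕ) :
    Nat.card {f : Fin m → α // Monotone f} = (Fintype.card α).multichoose m := by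
  rw [← Sym.card_sym_eq_multichoose, ← Nat.card_eq_fintype_card]
  refine Nat.card_eq_of_bijective (fun f => ⟨List.ofFn f.1, by simp⟩) ⟨?_, ?_⟩
  · rintro ⟨f, hf⟩ ⟨g, hg⟩ hfg
    have hperm : (List.ofFn f).Perm (List.ofFn g) :=
      Multiset.coe_eq_coe.mp (congrArg Subtype.val hfg)
    exact Subtype.ext (List.ofFn_injective
      (hperm.eq_of_sortedLE (List.sortedLE_ofFn_iff.mpr hf) (List.sortedLE_ofFn_iff.mpr hg)))
  · rintro ⟨s, hs⟩
    obtain ⟨l, hl, rfl⟩ : ∃ l : List α, l.SortedLE ∧ (l : Multiset α) = s :=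
      ⟨s.sort, List.sortedLE_iff_pairwise.mpr (Multiset.pairwise_sort _ _), Multiset.sort_eq _ _⟩
    obtain rfl : l.length = m := hs
    exact ⟨⟨l.get, List.sortedLE_ofFn_iff.mp (by rwa [List.ofFn_get])⟩,
      Subtype.ext (congrArg Multiset.ofList (List.ofFn_get l))⟩

section Threshold

variable {α : Type*} [LinearOrder α] {d k : ℕ}

theorem Fin.monotone_append {u : Fin d → α} {v : Fin k → α} (hu : Monotone u) (hv : Monotone v)
    (huv : ∀ i j, u i ≤ v j) : Monotone (Fin.append u v) := by
  intro a b hab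
  cases a using Fin.addCases <;> cases b using Fin.addCases <;>
    simp only [Fin.append_left, Fin.append_right] at hab ⊢
  all_goals simp only [Fin.le_def, Fin.val_castAdd, Fin.val_natAdd] at hab
  · exact hu (Fin.le_def.2 hab)
  · exact huv _ _
  · omega
  · exact hv (Fin.le_def.2 (by omega))

theorem Monotone.card_filter_le_eq_iff {f : Fin (d + k) → α} (hf : Monotone f) (ℓ : α) :
    #{j | ℓ ≤ f j} = k ↔ (∀ i, f (Fin.castAdd k i) < ℓ) ∧ ∀ i, ℓ ≤ f (Fin.natAdd d i) := by
  constructor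
  · intro hcard
    constructor
    · intro i
      by_contra! hi
      have hsub : Ici (Fin.castAdd k i) ⊆ ({j | ℓ ≤ f j} : Finset _) := fun j hj =>
        mem_filter.2 ⟨mem_univ _, hi.trans (hf (mem_Ici.1 hj))⟩
      have := card_le_card hsub
      rw [Fin.card_Ici, hcard, Fin.val_castAdd] at this
      omega
    · intro i
      by_contra! hi
      have hsub : ({j | ℓ ≤ f j} : Finset _) ⊆ Ioi (Fin.natAdd d i) := fun j hj =>
        mem_Ioi.2 (lt_of_not_ge fun hji => ((hf hji).trans_lt hi).not_ge (mem_filter.1 hj).2)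
      have := card_le_card hsub
      rw [Fin.card_Ioi, hcard, Fin.val_natAdd] at this
      omega
  · rintro ⟨hlow, hhigh⟩
    rw [card_filter, Fin.sum_univ_add]
    simp [(hlow _).not_ge, hhigh]

def monotoneThresholdEquiv (ℓ : α) (d k : ℕ) :
    {f : Fin (d + k) → α // Monotone f ∧ #{j | ℓ ≤ f j} = k} ≃
      {g : Fin d → Set.Iio ℓ // Monotone g} × {h : Fin k → Set.Ici ℓ // Monotone h} where
  toFun f :=
    have hsplit := (f.2.1.card_filter_le_eq_iff ℓ).1 f.2.2
    (⟨fun i => ⟨f.1 (Fin.castAdd k i), hsplit.1 i⟩, fun _ _ hab => f.2.1 (Fin.le_def.2 hab)⟩,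
      ⟨fun i => ⟨f.1 (Fin.natAdd d i), hsplit.2 i⟩,
        fun _ _ hab => f.2.1 (Fin.le_def.2 (Nat.add_le_add_left hab d))⟩)
  invFun gh :=
    have hmono : Monotone (Fin.append (fun i => (gh.1.1 i).1) (fun i => (gh.2.1 i).1)) :=
      Fin.monotone_append (fun _ _ hab => gh.1.2 hab) (fun _ _ hab => gh.2.2 hab)
        fun i j => ((gh.1.1 i).2.trans_le (gh.2.1 j).2).le
    ⟨_, hmono, (hmono.card_filter_le_eq_iff ℓ).2
      ⟨fun i => by rw [Fin.append_left]; exact (gh.1.1 i).2,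
        fun i => by rw [Fin.append_right]; exact (gh.2.1 i).2⟩⟩
  left_inv _ := Subtype.ext Fin.append_castAdd_natAdd
  right_inv _ := by ext <;> simp

theorem Nat.card_monotone_card_filter_le_eq [Fintype α] (ℓ : α) (d k : ℕ) :
    Nat.card {f : Fin (d + k) → α // Monotone f ∧ #{j | ℓ ≤ f j} = k} =
      (Fintype.card (Set.Iio ℓ)).multichoose d * (Fintype.card (Set.Ici ℓ)).multichoose k := by
  rw [Nat.card_congr (monotoneThresholdEquiv ℓ d k), Nat.card_prod,
    Nat.card_monotone_fin_eq_multichoose, Nat.card_monotone_fin_eq_multichoose]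

end Threshold

/-- If `P` is uniform on the set of nondecreasing sequences in `{0,...,n}^m`, then for any
threshold `ℓ ∈ {0,...,n}` and `k ∈ {0,...,m}`, the probability that exactly `k` of the
coordinates `P(1),...,P(m)` are `≥ ℓ` equals
`choose(ℓ-1+m-k, m-k) * choose(n-ℓ+k, k) / choose(n+m, m)`
(the first binomial coefficient `(ℓ-1+m-k).choose (m-k)` is written `(ℓ+m-k-1).choose (m-k)`,
interpreted as `0` when `ℓ = 0` and `k < m`, matching the generalized convention). -/
theorem uniform_monotone_count_ge_threshold (n m : ℕ) (ℓ : Fin (n + 1)) (k : ℕ) (hk : k ≤ m) :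
    (((PMF.uniformOfFintype {f : Fin m → Fin (n + 1) // Monotone f}).toMeasure
        {a | (Finset.univ.filter fun j : Fin m => ℓ ≤ a.1 j).card = k}).toReal)
      = ((((ℓ : ℕ) + m - k - 1).choose (m - k) : ℝ) *
          ((n - (ℓ : ℕ) + k).choose k : ℝ)) / ((n + m).choose m : ℝ) := by
  classical
  obtain ⟨d, rfl⟩ : ∃ d, m = d + k := ⟨m - k, by omega⟩
  have hevent : Fintype.card {a : {f : Fin (d + k) → Fin (n + 1) // Monotone f} |
      #{j | ℓ ≤ a.1 j} = k} =
        ((ℓ : ℕ) + (d + k) - k - 1).choose (d + k - k) * (n - ℓ + k).choose k := by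
    rw [← Nat.card_eq_fintype_card, Set.coe_ofPred,
      Nat.card_congr (Equiv.subtypeSubtypeEquivSubtypeInter Monotone (#{j | ℓ ≤ · j} = k)),
      Nat.card_monotone_card_filter_le_eq, Fintype.card_Iio, Fintype.card_Ici, Fin.card_Iio,
      Fin.card_Ici, Nat.multichoose_eq, Nat.multichoose_eq]
    congr 2 <;> omega
  have hall : Fintype.card {f : Fin (d + k) → Fin (n + 1) // Monotone f} =
      (n + (d + k)).choose (d + k) := by
    rw [← Nat.card_eq_fintype_card, Nat.card_monotone_fin_eq_multichoose, Fintype.card_fin,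
      Nat.multichoose_eq, Nat.add_right_comm, Nat.add_sub_cancel]
  rw [PMF.toMeasure_uniformOfFintype_apply _ (Set.toFinite _).measurableSet, hevent, hall]
  simp
end

section
/- Let S_1,...,S_{n+m} be exchangeable real-valued random variables with no ties almost surely, and define p_j = (1/n) · #{ i ∈ {1,...,n} : S_{n+j} ≥ S_i } for j ∈ {1,...,m}. Then the vector of ordered p-values (p_(1),...,p_(m)) is uniformly distributed on A_{n,m} = { a ∈ {i/n : 0 ≤ i ≤ n}^m : a_1 ≤ ... ≤ a_m }. -/
/-!
The p-values depend on the scores only through their rank vector `ρ ∈ S_{n+m}`, which is uniform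
by exchangeability and the absence of ties. The p-value of a test point is the number of
calibration ranks below its rank, divided by `n`, so the sorted p-values depend on `ρ` only through
the set `T` of ranks of the test points. This set is uniform among the `m`-subsets of
`{0, …, n + m - 1}`, because `S_{n+m}` acts transitively on them, and the map sending
`T = {t_0 < ⋯ < t_{m-1}}` to `(t_k - k)_k` is the stars-and-bars bijection onto the nondecreasing
sequences in `{0, …, n}^m`.
-/

open MeasureTheory

open Finset Equiv Function
open scoped ENNReal Nat

namespace PMF

variable {α β : Type*} [Fintype α] [Nonempty α]

theorem map_uniformOfFintype_apply [DecidableEq β] (f : α → β) (b : β) :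
    (uniformOfFintype α).map f b = #{a | f a = b} * (Fintype.card α : ℝ≥0∞)⁻¹ := by
  simp [map_apply, tsum_fintype, Finset.sum_ite, eq_comm]

variable [Fintype β] [Nonempty β]

theorem eq_uniformOfFintype_of_apply_eq (p : PMF β) (h : ∀ b b', p b = p b') :
    p = uniformOfFintype β := by
  classical
  obtain ⟨b₀⟩ := ‹Nonempty β›
  have hsum : (Fintype.card β : ℝ≥0∞) * p b₀ = 1 := by
    rw [← p.tsum_coe, tsum_fintype, ← Finset.card_univ, ← nsmul_eq_mul, ← Finset.sum_const]
    exact Finset.sum_congr rfl fun b _ => h b₀ b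
  ext b
  rw [uniformOfFintype_apply, h b b₀]
  exact ENNReal.eq_inv_of_mul_eq_one_left (by rwa [mul_comm])

theorem map_uniformOfFintype_eq_of_card_fiber_eq [DecidableEq β] (f : α → β)
    (h : ∀ b b', #{a | f a = b} = #{a | f a = b'}) :
    (uniformOfFintype α).map f = uniformOfFintype β :=
  eq_uniformOfFintype_of_apply_eq _ fun b b' => by
    rw [map_uniformOfFintype_apply, map_uniformOfFintype_apply, h b b']

end PMF

theorem MulAction.card_filter_smul_eq_eq {G β : Type*} [Group G] [Fintype G] [MulAction G β]
    [MulAction.IsPretransitive G β] [DecidableEq β] (b₀ b b' : β) :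
    #{g : G | g • b₀ = b} = #{g : G | g • b₀ = b'} := by
  obtain ⟨σ, rfl⟩ := MulAction.exists_smul_eq G b b'
  refine Finset.card_equiv (Equiv.mulLeft σ) fun g => ?_
  simp [mul_smul]

namespace Tuple

variable {n : ℕ} {α : Type*} [LinearOrder α] {f : Fin n → α}

theorem eq_sort_of_strictMono {σ : Equiv.Perm (Fin n)} (h : StrictMono (f ∘ σ)) : σ = sort f :=
  eq_sort_iff.mpr ⟨h.monotone, fun _ _ hij heq => absurd (h.injective heq) hij.ne⟩

theorem strictMono_comp_sort (hf : Function.Injective f) : StrictMono (f ∘ sort f) :=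
  (monotone_sort f).strictMono_of_injective (hf.comp (sort f).injective)

theorem comp_perm_comp_sort_eq_of_monotone (hf : Monotone f) (σ : Equiv.Perm (Fin n)) :
    (f ∘ σ) ∘ sort (f ∘ σ) = f := by
  rw [comp_perm_comp_sort_eq_comp_sort, sort_eq_refl_iff_monotone.mpr hf, Equiv.coe_refl,
    Function.comp_id]

end Tuple

theorem Fin.castAdd_ne_natAdd {n m : ℕ} (i : Fin n) (j : Fin m) :
    Fin.castAdd m i ≠ Fin.natAdd n j :=
  Fin.ne_of_lt (by simp [Fin.lt_def]; omega)

theorem Fin.natAdd_ne_castAdd {n m : ℕ} (i : Fin n) (j : Fin m) :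
    Fin.natAdd n j ≠ Fin.castAdd m i :=
  (Fin.castAdd_ne_natAdd i j).symm

theorem Finset.val_orderEmbOfFin_eq_add_card {N k : ℕ} (s : Finset (Fin N)) (h : #s = k)
    (i : Fin k) : (s.orderEmbOfFin h i : ℕ) = i + #{b ∈ sᶜ | b < s.orderEmbOfFin h i} := by
  set e := s.orderEmbOfFin h
  have hin : {b ∈ Iio (e i) | b ∈ s} = (Iio i).map e.toEmbedding := by
    ext b
    simp only [mem_filter, mem_map, mem_Iio, RelEmbedding.coe_toEmbedding]
    constructor
    · rintro ⟨hlt, hb⟩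
      obtain ⟨i', rfl⟩ : b ∈ Set.range e := by rwa [range_orderEmbOfFin]
      exact ⟨i', e.lt_iff_lt.mp hlt, rfl⟩
    · rintro ⟨i', hi', rfl⟩
      exact ⟨e.lt_iff_lt.mpr hi', s.orderEmbOfFin_mem h i'⟩
  have hout : {b ∈ Iio (e i) | b ∉ s} = {b ∈ sᶜ | b < e i} := by
    ext b
    simp [and_comm]
  rw [← Fin.card_Iio, ← card_filter_add_card_filter_not (s := Iio (e i)) (· ∈ s), hin, hout,
    card_map, Fin.card_Iio]

theorem measurableSet_setOf_strictMono_comp {ι κ : Type*} [Preorder ι] [Countable ι]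
    (τ : ι → κ) : MeasurableSet {x : κ → ℝ | StrictMono (x ∘ τ)} := by
  simp only [StrictMono, Set.ofPred_forall]
  exact .iInter fun a => .iInter fun b => .iInter fun _ =>
    measurableSet_lt (measurable_pi_apply _) (measurable_pi_apply _)

theorem ae_injective_of_measure_eq_zero {ι : Type*} [Countable ι] {ν : Measure (ι → ℝ)}
    (hties : ∀ i j, i ≠ j → ν {x | x i = x j} = 0) : ∀ᵐ x ∂ν, Function.Injective x := by
  have hsub : {x : ι → ℝ | ¬Function.Injective x} ⊆
      ⋃ i, ⋃ j, ⋃ (_ : i ≠ j), {x | x i = x j} := by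
    intro x hx
    simp only [Function.Injective, Set.mem_ofPred_eq, not_forall] at hx
    obtain ⟨i, j, hij, hne⟩ := hx
    exact Set.mem_iUnion₂.mpr ⟨i, j, Set.mem_iUnion.mpr ⟨hne, hij⟩⟩
  exact measure_mono_null hsub <| measure_iUnion_null fun i => measure_iUnion_null fun j =>
    measure_iUnion_null fun hij => hties i j hij

section Exchangeable

variable {N : ℕ} {ν : Measure (Fin N → ℝ)}

theorem pairwise_disjoint_setOf_strictMono_comp {α : Type*} [LinearOrder α] :
    Pairwise (Disjoint on fun τ : Perm (Fin N) => {x : Fin N → α | StrictMono (x ∘ τ)}) :=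
  fun _ _ hne => Set.disjoint_left.mpr fun _ hx hx' =>
    hne ((Tuple.eq_sort_of_strictMono hx).trans (Tuple.eq_sort_of_strictMono hx').symm)

theorem measure_eq_sum_measure_inter_setOf_strictMono_comp
    (hties : ∀ i j, i ≠ j → ν {x | x i = x j} = 0) {E : Set (Fin N → ℝ)} (hE : MeasurableSet E) :
    ν E = ∑ τ : Perm (Fin N), ν (E ∩ {x | StrictMono (x ∘ τ)}) := by
  have hcover : ∀ᵐ x ∂ν, x ∈ ⋃ τ : Perm (Fin N), {x : Fin N → ℝ | StrictMono (x ∘ τ)} := by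
    filter_upwards [ae_injective_of_measure_eq_zero hties] with x hx
    exact Set.mem_iUnion.mpr ⟨_, Tuple.strictMono_comp_sort hx⟩
  rw [← measure_inter_conull hcover, Set.ofPred_mem_eq, Set.inter_iUnion,
    measure_iUnion (fun _ _ hne => (pairwise_disjoint_setOf_strictMono_comp hne).mono
      Set.inter_subset_right Set.inter_subset_right)
    fun τ => hE.inter (measurableSet_setOf_strictMono_comp τ), tsum_fintype]

variable [IsProbabilityMeasure ν]

theorem measure_setOf_strictMono_comp (hexch : ∀ σ : Perm (Fin N), ν.map (· ∘ σ) = ν)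
    (hties : ∀ i j, i ≠ j → ν {x | x i = x j} = 0) (τ : Perm (Fin N)) :
    ν {x | StrictMono (x ∘ τ)} = ((N ! : ℕ) : ℝ≥0∞)⁻¹ := by
  have hmono : MeasurableSet {x : Fin N → ℝ | StrictMono x} :=
    measurableSet_setOf_strictMono_comp id
  have hinv (σ : Perm (Fin N)) : ν {x | StrictMono (x ∘ σ)} = ν {x | StrictMono x} := by
    change ν ((· ∘ σ) ⁻¹' {x | StrictMono x}) = _
    have hcomp : Measurable fun x : Fin N → ℝ => x ∘ σ := by fun_prop
    rw [← Measure.map_apply hcomp hmono, hexch σ]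
  have hsum := measure_eq_sum_measure_inter_setOf_strictMono_comp hties MeasurableSet.univ
  simp only [Set.univ_inter, hinv, Finset.sum_const, Finset.card_univ, Fintype.card_perm,
    Fintype.card_fin, nsmul_eq_mul, measure_univ] at hsum
  rw [hinv]
  exact ENNReal.eq_inv_of_mul_eq_one_left (by rw [mul_comm, ← hsum])

theorem map_eq_toMeasure_map_uniformOfFintype (hexch : ∀ σ : Perm (Fin N), ν.map (· ∘ σ) = ν)
    (hties : ∀ i j, i ≠ j → ν {x | x i = x j} = 0) {β : Type*} [MeasurableSpace β]
    {g : (Fin N → ℝ) → β} (hg : Measurable g) (G : Perm (Fin N) → β)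
    (hG : ∀ f : Fin N → ℝ, StrictMono f → ∀ ρ : Perm (Fin N), g (f ∘ ρ) = G ρ) :
    ν.map g = ((PMF.uniformOfFintype (Perm (Fin N))).map G).toMeasure := by
  ext s hs
  rw [Measure.map_apply hg hs, PMF.toMeasure_apply_eq_toOuterMeasure_apply _ hs,
    PMF.toOuterMeasure_map_apply, PMF.toOuterMeasure_apply_fintype,
    measure_eq_sum_measure_inter_setOf_strictMono_comp hties (hg hs)]
  refine Fintype.sum_equiv (Equiv.inv _) _ _ fun τ => ?_
  have hcell : ∀ x ∈ {x : Fin N → ℝ | StrictMono (x ∘ τ)}, g x = G τ⁻¹ := fun x hx => by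
    simpa [Function.comp_assoc] using hG _ hx τ⁻¹
  by_cases h : G τ⁻¹ ∈ s
  · rw [Set.inter_eq_right.mpr fun x hx => by simp [hcell x hx, h],
      measure_setOf_strictMono_comp hexch hties, Equiv.inv_apply,
      Set.indicator_of_mem (show τ⁻¹ ∈ G ⁻¹' s from h),
      PMF.uniformOfFintype_apply, Fintype.card_perm, Fintype.card_fin]
  · have hempty : g ⁻¹' s ∩ {x | StrictMono (x ∘ τ)} = ∅ :=
      Set.eq_empty_of_forall_notMem fun x ⟨hxs, hx⟩ => h (hcell x hx ▸ hxs)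
    rw [hempty, measure_empty, Equiv.inv_apply,
      Set.indicator_of_notMem (show τ⁻¹ ∉ G ⁻¹' s from h)]

end Exchangeable

noncomputable section

namespace Set.powersetCard

variable {n m : ℕ}

def gaps (s : Set.powersetCard (Fin (n + m)) m) : {a : Fin m → Fin (n + 1) // Monotone a} :=
  ⟨fun k => ⟨#{b ∈ (s : Finset (Fin (n + m)))ᶜ | b < (s : Finset _).orderEmbOfFin (card_eq s) k},
    Nat.lt_succ_of_le <| (card_filter_le _ _).trans <| by simp [card_compl, card_eq s]⟩,
   fun _ _ hk => Finset.card_le_card fun b => by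
    simp only [mem_filter]
    exact fun ⟨hb, hlt⟩ => ⟨hb, hlt.trans_le ((orderEmbOfFin _ _).monotone hk)⟩⟩

def shiftEmb (a : {a : Fin m → Fin (n + 1) // Monotone a}) : Fin m ↪o Fin (n + m) :=
  OrderEmbedding.ofStrictMono (fun k => ⟨a.1 k + k, by omega⟩) fun _ _ hk =>
    Fin.mk_lt_mk.mpr (Nat.add_lt_add_of_le_of_lt (a.2 hk.le) hk)

theorem val_shiftEmb_apply (a : {a : Fin m → Fin (n + 1) // Monotone a}) (k : Fin m) :
    (shiftEmb a k : ℕ) = a.1 k + k :=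
  rfl

theorem val_orderEmbOfFin_eq_gaps_add (s : Set.powersetCard (Fin (n + m)) m) (k : Fin m) :
    ((s : Finset (Fin (n + m))).orderEmbOfFin (card_eq s) k : ℕ) = (gaps s).1 k + k := by
  rw [Finset.val_orderEmbOfFin_eq_add_card, add_comm]
  rfl

def gapsEquiv : Set.powersetCard (Fin (n + m)) m ≃ {a : Fin m → Fin (n + 1) // Monotone a} where
  toFun := gaps
  invFun a := ofFinEmb m _ (shiftEmb a).toEmbedding
  left_inv s := by
    have : shiftEmb (gaps s) = (s : Finset (Fin (n + m))).orderEmbOfFin (card_eq s) := by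
      ext k
      rw [val_shiftEmb_apply, val_orderEmbOfFin_eq_gaps_add]
    apply Subtype.ext
    rw [val_ofFinEmb, this]
    exact map_orderEmbOfFin_univ _ _
  right_inv a := by
    dsimp only
    set s := ofFinEmb m _ (shiftEmb a).toEmbedding
    have he : ((s : Finset (Fin (n + m))).orderEmbOfFin (card_eq s) :
        Fin m → Fin (n + m)) = shiftEmb a :=
      (orderEmbOfFin_unique _ (fun k => by simp [s, val_ofFinEmb])
        (shiftEmb a).strictMono).symm
    ext k
    have := val_orderEmbOfFin_eq_gaps_add s k
    rw [he, val_shiftEmb_apply] at this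
    omega

end Set.powersetCard

namespace ConformalPValue

variable (n m : ℕ) {α : Type*} [LinearOrder α]

def calibrationCount (x : Fin (n + m) → α) (j : Fin m) : ℕ :=
  Nat.card {i : Fin n // x (Fin.castAdd m i) ≤ x (Fin.natAdd n j)}

def pValues (x : Fin (n + m) → α) (j : Fin m) : ℝ := (calibrationCount n m x j : ℝ) / n

def sortedPValues (x : Fin (n + m) → α) : Fin m → ℝ := pValues n m x ∘ Tuple.sort (pValues n m x)

variable {n m}

theorem pValues_comp_strictMono {β : Type*} [LinearOrder β] {f : α → β} (hf : StrictMono f)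
    (x : Fin (n + m) → α) : pValues n m (f ∘ x) = pValues n m x := by
  ext j
  simp only [pValues, calibrationCount, comp_apply, hf.le_iff_le]

theorem sortedPValues_comp_strictMono {β : Type*} [LinearOrder β] {f : α → β} (hf : StrictMono f)
    (x : Fin (n + m) → α) : sortedPValues n m (f ∘ x) = sortedPValues n m x := by
  rw [sortedPValues, sortedPValues, pValues_comp_strictMono hf]

theorem calibrationCount_eq_sum (x : Fin (n + m) → α) (j : Fin m) :
    calibrationCount n m x j =
      ∑ i : Fin n, if x (Fin.castAdd m i) ≤ x (Fin.natAdd n j) then 1 else 0 := by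
  rw [calibrationCount, Nat.card_eq_fintype_card, Fintype.card_subtype, card_filter]

theorem measurable_sortedPValues :
    Measurable (sortedPValues n m : (Fin (n + m) → ℝ) → Fin m → ℝ) := by
  have hcount : Measurable (calibrationCount n m : (Fin (n + m) → ℝ) → Fin m → ℕ) := by
    refine measurable_pi_lambda _ fun j => ?_
    simp_rw [calibrationCount_eq_sum]
    exact Finset.measurable_sum _ fun i _ => Measurable.ite
      (measurableSet_le (measurable_pi_apply _) (measurable_pi_apply _))
      measurable_const measurable_const
  exact (Measurable.of_discrete (f := fun c : Fin m → ℕ =>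
    (fun j => (c j : ℝ) / n) ∘ Tuple.sort (fun j => (c j : ℝ) / n))).comp hcount

variable (n m) in
/-- If the scores have rank vector `ρ`, then `ρ • testPositions n m` is the set of ranks of the
test scores. -/
def testPositions : Set.powersetCard (Fin (n + m)) m :=
  Set.powersetCard.ofFinEmb m _ (Fin.natAddEmb n)

theorem mem_smul_testPositions {ρ : Perm (Fin (n + m))} {b : Fin (n + m)} :
    b ∈ ((ρ • testPositions n m : Set.powersetCard (Fin (n + m)) m) : Finset (Fin (n + m))) ↔
      ∃ j, ρ (Fin.natAdd n j) = b := by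
  simp [Set.powersetCard.coe_smul, Finset.mem_smul_finset, testPositions, Perm.smul_def]

theorem calibrationCount_perm_eq_card (ρ : Perm (Fin (n + m))) (j : Fin m) :
    calibrationCount n m ρ j =
      #{b ∈ ((ρ • testPositions n m : Set.powersetCard _ m) : Finset (Fin (n + m)))ᶜ |
        b < ρ (Fin.natAdd n j)} := by
  rw [calibrationCount, Nat.card_eq_fintype_card, Fintype.card_subtype,
    ← card_map ((Fin.castAddEmb m).trans ρ.toEmbedding)]
  congr 1
  ext b
  rw [mem_filter, Finset.mem_compl, mem_smul_testPositions]
  obtain ⟨c, rfl⟩ := ρ.surjective b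
  induction c using Fin.addCases with
  | left i =>
    simp [Fin.natAdd_ne_castAdd, (ρ.injective.ne (Fin.castAdd_ne_natAdd i j)).le_iff_lt]
  | right j' => simp [Fin.castAdd_ne_natAdd]

theorem sortedPValues_perm_eq_gaps (ρ : Perm (Fin (n + m))) :
    sortedPValues n m ρ =
      fun k => ((Set.powersetCard.gapsEquiv (ρ • testPositions n m)).1 k : ℝ) / n := by
  set s := ρ • testPositions n m
  set v : Fin m → ℝ := fun k => ((Set.powersetCard.gaps s).1 k : ℝ) / n
  have hv : Monotone v := fun k k' hk =>
    div_le_div_of_nonneg_right (Nat.cast_le.mpr ((Set.powersetCard.gaps s).2 hk)) n.cast_nonneg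
  set σ := Tuple.sort fun j => ρ (Fin.natAdd n j)
  have hσ : (fun j => ρ (Fin.natAdd n j)) ∘ σ =
      (s : Finset (Fin (n + m))).orderEmbOfFin (Set.powersetCard.card_eq s) :=
    orderEmbOfFin_unique _ (fun k => mem_smul_testPositions.mpr ⟨_, rfl⟩)
      (Tuple.strictMono_comp_sort (ρ.injective.comp (Fin.natAdd_injective m n)))
  have hp : pValues n m ρ = v ∘ σ.symm := by
    ext j
    obtain ⟨k, rfl⟩ := σ.surjective j
    simp only [pValues, calibrationCount_perm_eq_card, comp_apply, symm_apply_apply, v,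
      Set.powersetCard.gaps, ← hσ]
    rfl
  rw [sortedPValues, hp, Tuple.comp_perm_comp_sort_eq_of_monotone hv]
  rfl

theorem map_sortedPValues_uniformOfFintype :
    (PMF.uniformOfFintype (Perm (Fin (n + m)))).map
        (fun ρ : Perm (Fin (n + m)) => sortedPValues n m ρ) =
      (PMF.uniformOfFintype {a : Fin m → Fin (n + 1) // Monotone a}).map
        fun a j => ((a.1 j : ℕ) : ℝ) / n := by
  have hfac : (fun ρ : Perm (Fin (n + m)) => sortedPValues n m ρ) =
      (fun a j => ((a.1 j : ℕ) : ℝ) / n) ∘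
        fun ρ => Set.powersetCard.gapsEquiv (ρ • testPositions n m) :=
    funext sortedPValues_perm_eq_gaps
  have := Set.powersetCard.isPretransitive (α := Fin (n + m)) (n := m)
  classical
  rw [hfac, ← PMF.map_comp, PMF.map_uniformOfFintype_eq_of_card_fiber_eq]
  intro a a'
  simp only [← Equiv.eq_symm_apply]
  exact MulAction.card_filter_smul_eq_eq _ _ _

end ConformalPValue

end

theorem ordered_pvalues_uniform_general {Ω : Type*} [MeasurableSpace Ω] (μ : Measure Ω)
    [IsProbabilityMeasure μ] (n m : ℕ)
    (S : Fin (n + m) → Ω → ℝ) (hmeas : ∀ i, Measurable (S i))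
    (hexch : ∀ σ : Equiv.Perm (Fin (n + m)),
      Measure.map (fun ω => fun i => S (σ i) ω) μ = Measure.map (fun ω => fun i => S i ω) μ)
    (hties : ∀ i j, i ≠ j → μ {ω | S i ω = S j ω} = 0) :
    Measure.map
        (fun ω =>
          (fun j : Fin m =>
              (Nat.card {i : Fin n // S (Fin.castAdd m i) ω ≤ S (Fin.natAdd n j) ω} : ℝ) / n) ∘
            (Tuple.sort fun j : Fin m =>
              (Nat.card {i : Fin n // S (Fin.castAdd m i) ω ≤ S (Fin.natAdd n j) ω} : ℝ) / n))
        μ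
      = Measure.map
          (fun a : {f : Fin m → Fin (n + 1) // Monotone f} =>
            fun j : Fin m => ((a.1 j : ℕ) : ℝ) / n)
          (PMF.uniformOfFintype {f : Fin m → Fin (n + 1) // Monotone f}).toMeasure := by
  have hX : Measurable fun ω i => S i ω := measurable_pi_lambda _ hmeas
  set ν := μ.map fun ω i => S i ω
  have : IsProbabilityMeasure ν := Measure.isProbabilityMeasure_map hX.aemeasurable
  have hexchν (σ : Perm (Fin (n + m))) : ν.map (· ∘ σ) = ν := by
    rw [Measure.map_map (by fun_prop) hX]
    exact hexch σ
  have htiesν (i j : Fin (n + m)) (hij : i ≠ j) : ν {x | x i = x j} = 0 := by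
    rw [Measure.map_apply hX
      (measurableSet_eq_fun (measurable_pi_apply i) (measurable_pi_apply j))]
    exact hties i j hij
  change μ.map (ConformalPValue.sortedPValues n m ∘ fun ω i => S i ω) = _
  rw [← Measure.map_map ConformalPValue.measurable_sortedPValues hX,
    map_eq_toMeasure_map_uniformOfFintype hexchν htiesν ConformalPValue.measurable_sortedPValues
      _ fun f hf ρ => ConformalPValue.sortedPValues_comp_strictMono hf ρ,
    ConformalPValue.map_sortedPValues_uniformOfFintype,
    ← PMF.toMeasure_map _ _ Measurable.of_discrete]

/-- Let `S_1,...,S_{n+m}` be exchangeable real-valued random variables with no ties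
almost surely, and define `p_j = (1/n) · #{i ∈ {1,...,n} : S_{n+j} ≥ S_i}` for
`j ∈ {1,...,m}`. Then the vector of ordered p-values `(p_(1),...,p_(m))` (obtained via
the sorting permutation `Tuple.sort`) is uniformly distributed on
`A_{n,m} = {a ∈ {i/n : 0 ≤ i ≤ n}^m : a_1 ≤ ... ≤ a_m}`. -/
theorem ordered_pvalues_uniform {Ω : Type*} [MeasurableSpace Ω] (μ : Measure Ω)
    [IsProbabilityMeasure μ] (n m : ℕ) (hn : 0 < n) (hm : 0 < m)
    (S : Fin (n + m) → Ω → ℝ) (hmeas : ∀ i, Measurable (S i))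
    (hexch : ∀ σ : Equiv.Perm (Fin (n + m)),
      Measure.map (fun ω => fun i => S (σ i) ω) μ = Measure.map (fun ω => fun i => S i ω) μ)
    (hties : ∀ i j, i ≠ j → μ {ω | S i ω = S j ω} = 0) :
    Measure.map
        (fun ω =>
          (fun j : Fin m =>
              (Nat.card {i : Fin n // S (Fin.castAdd m i) ω ≤ S (Fin.natAdd n j) ω} : ℝ) / n) ∘
            (Tuple.sort fun j : Fin m =>
              (Nat.card {i : Fin n // S (Fin.castAdd m i) ω ≤ S (Fin.natAdd n j) ω} : ℝ) / n))
        μ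
      = Measure.map
          (fun a : {f : Fin m → Fin (n + 1) // Monotone f} =>
            fun j : Fin m => ((a.1 j : ℕ) : ℝ) / n)
          (PMF.uniformOfFintype {f : Fin m → Fin (n + 1) // Monotone f}).toMeasure :=
  ordered_pvalues_uniform_general μ n m S hmeas hexch hties
end

section
/- Let C_1,...,C_m be random subsets of {1,...,K} with P(y ∈ C_j) ≥ 1 - α for each j. Then the majority vote set C^M = { y : sum_{j=1}^m 1{y ∈ C_j} ≥ m/2 } satisfies P(y ∈ C^M) ≥ 1 - 2α. -/
open MeasureTheory Finset

/-!
Markov's inequality applied to the number of sets `C_j` that miss `y`: its expectation is at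
most `m α`, and the majority vote misses `y` only when at least `m / 2` of the `C_j` do, which
therefore has probability at most `2 α`.
-/

section
variable {Ω ι : Type*} [MeasurableSpace Ω] {μ : Measure Ω} {P : ι → Ω → Prop}
  [∀ i ω, Decidable (P i ω)]

theorem mul_measureReal_le_card_filter_le_sum [IsFiniteMeasure μ] (s : Finset ι)
    (hP : ∀ i, MeasurableSet {ω | P i ω}) (r : ℝ) :
    r * μ.real {ω | r ≤ #{i ∈ s | P i ω}} ≤ ∑ i ∈ s, μ.real {ω | P i ω} := by
  have hcount : ∀ ω, (#{i ∈ s | P i ω} : ℝ) = ∑ i ∈ s, {ω | P i ω}.indicator (1 : Ω → ℝ) ω := by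
    intro ω
    simp [Set.indicator_apply, sum_boole]
  have hint : ∀ i ∈ s, Integrable ({ω | P i ω}.indicator (1 : Ω → ℝ)) μ :=
    fun i _ => (integrable_const 1).indicator (hP i)
  simp_rw [hcount]
  calc r * μ.real {ω | r ≤ ∑ i ∈ s, {ω | P i ω}.indicator (1 : Ω → ℝ) ω}
      ≤ ∫ ω, ∑ i ∈ s, {ω | P i ω}.indicator (1 : Ω → ℝ) ω ∂μ :=
        mul_meas_ge_le_integral_of_nonneg
          (.of_forall fun ω => sum_nonneg fun i _ => Set.indicator_nonneg (by simp) ω)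
          (integrable_finsetSum _ hint) r
    _ = ∑ i ∈ s, μ.real {ω | P i ω} := by
        rw [integral_finsetSum _ hint]
        simp_rw [integral_indicator_one (hP _)]

theorem measureReal_card_filter_lt_half_le [IsFiniteMeasure μ] [Fintype ι]
    (hP : ∀ i, MeasurableSet {ω | P i ω}) {α : ℝ} (hα : 0 ≤ α)
    (hmiss : ∀ i, μ.real {ω | ¬ P i ω} ≤ α) :
    μ.real {ω | (#{i | P i ω} : ℝ) < Fintype.card ι / 2} ≤ 2 * α := by
  rcases (Fintype.card ι).eq_zero_or_pos with hn | hn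
  · simp [hn, not_lt.2 (Nat.cast_nonneg _), hα]
  have hsub : {ω | (#{i | P i ω} : ℝ) < Fintype.card ι / 2} ⊆
      {ω | (Fintype.card ι : ℝ) / 2 ≤ #{i | ¬ P i ω}} := by
    intro ω hω
    have hsplit : (#{i | P i ω} : ℝ) + #{i | ¬ P i ω} = Fintype.card ι := by
      exact_mod_cast (card_filter_add_card_filter_not _).trans card_univ
    simp only [Set.mem_ofPred_eq] at hω ⊢
    linarith
  have hhalf : (0 : ℝ) < Fintype.card ι / 2 := by positivity
  refine le_of_mul_le_mul_left ?_ hhalf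
  calc (Fintype.card ι : ℝ) / 2 * μ.real {ω | (#{i | P i ω} : ℝ) < Fintype.card ι / 2}
      ≤ (Fintype.card ι : ℝ) / 2 * μ.real {ω | (Fintype.card ι : ℝ) / 2 ≤ #{i | ¬ P i ω}} :=
        mul_le_mul_of_nonneg_left (measureReal_mono hsub) hhalf.le
    _ ≤ ∑ i, μ.real {ω | ¬ P i ω} :=
        mul_measureReal_le_card_filter_le_sum univ (fun i => (hP i).compl) _
    _ ≤ ∑ _i : ι, α := sum_le_sum fun i _ => hmiss i
    _ = (Fintype.card ι : ℝ) / 2 * (2 * α) := by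
        simp only [sum_const, card_univ, nsmul_eq_mul]
        ring

theorem one_sub_two_mul_le_measureReal_card_filter_ge_half [IsProbabilityMeasure μ] [Fintype ι]
    (hP : ∀ i, MeasurableSet {ω | P i ω}) {α : ℝ} (hα : 0 ≤ α)
    (hcov : ∀ i, 1 - α ≤ μ.real {ω | P i ω}) :
    1 - 2 * α ≤ μ.real {ω | (Fintype.card ι : ℝ) / 2 ≤ #{i | P i ω}} := by
  have hmiss : ∀ i, μ.real {ω | ¬ P i ω} ≤ α := fun i => by
    have hcompl : μ.real {ω | ¬ P i ω} = 1 - μ.real {ω | P i ω} :=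
      probReal_compl_eq_one_sub (hP i)
    linarith [hcov i]
  have hfail := measureReal_card_filter_lt_half_le hP hα hmiss
  have hunion := measureReal_union_le (μ := μ)
    {ω | (Fintype.card ι : ℝ) / 2 ≤ #{i | P i ω}} {ω | (#{i | P i ω} : ℝ) < Fintype.card ι / 2}
  rw [← Set.ofPred_or] at hunion
  simp only [le_or_gt, Set.ofPred_true, probReal_univ] at hunion
  linarith
end

/-- Let `C_1,...,C_m` be random subsets of `{1,...,K}` with `P(y ∈ C_j) ≥ 1 - α` for each
`j`. Then the majority vote set `C^M = {y : ∑_j 1{y ∈ C_j} ≥ m/2}` satisfies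
`P(y ∈ C^M) ≥ 1 - 2α`. -/
theorem majority_vote_coverage {Ω : Type*} [MeasurableSpace Ω] (ℙ : Measure Ω)
    [IsProbabilityMeasure ℙ] (K m : ℕ) (C : Fin m → Ω → Finset (Fin K)) (y : Fin K)
    (α : ℝ) (hα : 0 ≤ α)
    (hmeas : ∀ j, MeasurableSet {ω | y ∈ C j ω})
    (hcov : ∀ j, ENNReal.ofReal (1 - α) ≤ ℙ {ω | y ∈ C j ω}) :
    ENNReal.ofReal (1 - 2 * α) ≤
      ℙ {ω | (m : ℝ) / 2 ≤ ((Finset.univ.filter fun j => y ∈ C j ω).card : ℝ)} := by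
  rw [ENNReal.ofReal_le_iff_le_toReal (measure_ne_top _ _)]
  have hcov_real : ∀ j, 1 - α ≤ ℙ.real {ω | y ∈ C j ω} := fun j =>
    (ENNReal.ofReal_le_iff_le_toReal (measure_ne_top _ _)).1 (hcov j)
  have h := one_sub_two_mul_le_measureReal_card_filter_ge_half hmeas hα hcov_real
  rwa [Fintype.card_fin] at h
end

section
/- Let β follow BetaBin(m, n+1-k_α, k_α) with k_α = ⌊(n+1)α⌋, let Z follow Binomial(m, 1-α') with α' = k_α/(n+1), and let q be the α-quantile of Binomial(m, 1-α). Then P(β < q) ≤ α + d_TV(Binomial(m,1-α'), BetaBin(m, n+1-k_α, k_α)). -/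
/-!
Write `k = ⌊(n+1)α⌋` and `α' = k/(n+1) ≤ α`. The binomial cdf `p ↦ P(Bin(m, p) < q)` is
nonincreasing, its derivative being `-m P(Bin(m-1, p) = q-1)`, so
`P(Bin(m, 1-α') < q) ≤ P(Bin(m, 1-α) < q) ≤ α`. The quantile condition also forces `q ≤ m+1`, so
`{0, …, q-1}` is an event of the common support `{0, …, m}` of the two probability distributions
`Bin(m, 1-α')` and `BetaBin(m, n+1-k, k)`, and swapping one for the other changes its probability
by at most their total variation distance.
-/

open scoped BigOperators

/-- The Binomial pmf. -/
noncomputable def binomPmf (m : ℕ) (p : ℝ) (k : ℕ) : ℝ :=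
  (m.choose k : ℝ) * p ^ k * (1 - p) ^ (m - k)

/-- The Beta-Binomial pmf with positive integer parameters. -/
noncomputable def betaBinPmf (m a b k : ℕ) : ℝ :=
  ((k + a - 1).choose k : ℝ) * ((m - k + b - 1).choose (m - k) : ℝ) /
    ((m - 1 + a + b).choose m : ℝ)

open Finset Polynomial

/-- Chu–Vandermonde at negative arguments, since `choose (-c) k = (-1) ^ k * multichoose c k`. -/
theorem Nat.add_multichoose_eq (a b m : ℕ) :
    (a + b).multichoose m = ∑ ij ∈ antidiagonal m, a.multichoose ij.1 * b.multichoose ij.2 := by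
  have hcast : ∀ c k : ℕ, Ring.multichoose (c : ℤ) k = c.multichoose k := fun c k => by
    rw [Nat.multichoose_eq]; rfl
  have hneg : ∀ c k : ℕ, Ring.choose (-(c : ℤ)) k = Int.negOnePow k • (c.multichoose k : ℤ) :=
    fun c k => by rw [Ring.choose_neg', hcast]
  have := Ring.add_choose_eq m (Commute.all (-(a : ℤ)) (-(b : ℤ)))
  simp only [← neg_add, ← Nat.cast_add, hneg, smul_mul_smul_comm] at this
  rw [Finset.sum_congr rfl fun ij hij => by
    rw [← Int.negOnePow_add, ← Nat.cast_add, mem_antidiagonal.mp hij], ← Finset.smul_sum] at this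
  exact_mod_cast (smul_left_cancel_iff _).mp this

theorem betaBinPmf_eq (m a b k : ℕ) :
    betaBinPmf m a b k = a.multichoose k * b.multichoose (m - k) / (a + b).multichoose m := by
  rw [betaBinPmf, Nat.multichoose_eq, Nat.multichoose_eq, Nat.multichoose_eq, add_comm a k,
    add_comm b (m - k)]
  rcases m with _ | m
  · simp
  · rw [show m + 1 - 1 + a + b = a + b + (m + 1) - 1 by omega]

theorem sum_betaBinPmf {a b : ℕ} (hab : 0 < a + b) (m : ℕ) :
    ∑ k ∈ range (m + 1), betaBinPmf m a b k = 1 := by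
  have hpos : 0 < (a + b).multichoose m := by
    rw [Nat.multichoose_eq]; exact Nat.choose_pos (by omega)
  simp_rw [betaBinPmf_eq, ← Finset.sum_div]
  rw [div_eq_one_iff_eq (by positivity), Nat.add_multichoose_eq,
    Finset.Nat.sum_antidiagonal_eq_sum_range_succ (fun i j => a.multichoose i * b.multichoose j)]
  norm_cast

theorem binomPmf_eq_eval_bernsteinPolynomial (m : ℕ) (p : ℝ) (k : ℕ) :
    binomPmf m p k = (bernsteinPolynomial ℝ m k).eval p := by
  simp [binomPmf, bernsteinPolynomial]

theorem derivative_sum_bernsteinPolynomial {R : Type*} [CommRing R] (m q : ℕ) :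
    derivative (∑ k ∈ range (q + 1), bernsteinPolynomial R m k) =
      -(m * bernsteinPolynomial R (m - 1) q) := by
  induction q with
  | zero => simp [bernsteinPolynomial.derivative_zero]
  | succ q ih =>
    rw [sum_range_succ, derivative_add, ih, bernsteinPolynomial.derivative_succ]
    ring

theorem binomPmf_nonneg {p : ℝ} (hp : p ∈ Set.Icc 0 1) (m k : ℕ) : 0 ≤ binomPmf m p k := by
  have hp0 : 0 ≤ p := hp.1
  have hp1 : 0 ≤ 1 - p := sub_nonneg.mpr hp.2
  unfold binomPmf
  positivity

theorem antitoneOn_sum_binomPmf (m q : ℕ) :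
    AntitoneOn (fun p => ∑ k ∈ range q, binomPmf m p k) (Set.Icc 0 1) := by
  rcases q with _ | q
  · simp [antitoneOn_const]
  simp_rw [binomPmf_eq_eval_bernsteinPolynomial, ← eval_finsetSum]
  apply antitoneOn_of_deriv_nonpos (convex_Icc 0 1) (Polynomial.continuousOn _)
    (Polynomial.differentiableOn _)
  intro p hp
  rw [interior_Icc] at hp
  rw [Polynomial.deriv, derivative_sum_bernsteinPolynomial, eval_neg, eval_mul, eval_natCast,
    ← binomPmf_eq_eval_bernsteinPolynomial, neg_nonpos]
  exact mul_nonneg m.cast_nonneg (binomPmf_nonneg (Set.Ioo_subset_Icc_self hp) _ _)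

theorem sum_binomPmf (m : ℕ) (p : ℝ) : ∑ k ∈ range (m + 1), binomPmf m p k = 1 := by
  simp_rw [binomPmf_eq_eval_bernsteinPolynomial, ← eval_finsetSum, bernsteinPolynomial.sum,
    eval_one]

theorem le_succ_of_sum_range_binomPmf_lt_one {m q : ℕ} {p : ℝ}
    (h : ∑ k ∈ range q, binomPmf m p k < 1) : q ≤ m + 1 := by
  by_contra! hq
  rw [← sum_range_add_sum_Ico _ hq.le, sum_binomPmf, sum_eq_zero fun k hk => ?_] at h
  · simp at h
  · simp [binomPmf, Nat.choose_eq_zero_of_lt (mem_Ico.mp hk).1]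

theorem sum_sub_sum_le_half_sum_abs_sub {ι : Type*} [DecidableEq ι] {s t : Finset ι}
    {f g : ι → ℝ} (hst : s ⊆ t) (h : ∑ i ∈ t, f i = ∑ i ∈ t, g i) :
    ∑ i ∈ s, g i - ∑ i ∈ s, f i ≤ (1 / 2) * ∑ i ∈ t, |f i - g i| := by
  have htot : ∑ i ∈ t \ s, (g i - f i) + ∑ i ∈ s, (g i - f i) = 0 := by
    rw [sum_sdiff hst, sum_sub_distrib, h, sub_self]
  have hs : ∑ i ∈ s, (g i - f i) ≤ ∑ i ∈ s, |f i - g i| :=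
    sum_le_sum fun i _ => abs_sub_comm (f i) (g i) ▸ le_abs_self _
  have hsc : -∑ i ∈ t \ s, (g i - f i) ≤ ∑ i ∈ t \ s, |f i - g i| := by
    rw [← sum_neg_distrib]
    exact sum_le_sum fun i _ => neg_sub (g i) (f i) ▸ le_abs_self _
  rw [← sum_sdiff hst (f := fun i => |f i - g i|), ← sum_sub_distrib]
  linarith

theorem quantile_shift_tv_bound_general (n m : ℕ) (α : ℝ) (hα : α ∈ Set.Ioo (0 : ℝ) 1) (q : ℕ)
    (hq1 : ∑ k ∈ Finset.range q, binomPmf m (1 - α) k ≤ α) :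
    ∑ k ∈ Finset.range q,
        betaBinPmf m (n + 1 - ⌊((n : ℝ) + 1) * α⌋₊) ⌊((n : ℝ) + 1) * α⌋₊ k
      ≤ α + (1 / 2) * ∑ k ∈ Finset.range (m + 1),
          |binomPmf m (1 - (⌊((n : ℝ) + 1) * α⌋₊ : ℝ) / ((n : ℝ) + 1)) k -
            betaBinPmf m (n + 1 - ⌊((n : ℝ) + 1) * α⌋₊) ⌊((n : ℝ) + 1) * α⌋₊ k| := by
  obtain ⟨hα0, hα1⟩ := hα
  set K := ⌊((n : ℝ) + 1) * α⌋₊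
  have hKn : K ≤ n := Nat.lt_add_one_iff.mp <| (Nat.floor_lt (by positivity)).mpr <| by
    push_cast; exact mul_lt_of_lt_one_right (by positivity) hα1
  have hα' : (K : ℝ) / (n + 1) ≤ α := by
    rw [div_le_iff₀ (by positivity), mul_comm]
    exact Nat.floor_le (by positivity)
  have hα'0 : (0 : ℝ) ≤ K / (n + 1) := by positivity
  have hcdf : ∑ k ∈ range q, binomPmf m (1 - K / (n + 1)) k ≤ α :=
    (antitoneOn_sum_binomPmf m q ⟨by linarith, by linarith⟩ ⟨by linarith, by linarith⟩
      (by linarith)).trans hq1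
  have hq : q ≤ m + 1 := le_succ_of_sum_range_binomPmf_lt_one (hq1.trans_lt hα1)
  have hmass : ∑ k ∈ range (m + 1), binomPmf m (1 - K / (n + 1)) k =
      ∑ k ∈ range (m + 1), betaBinPmf m (n + 1 - K) K k := by
    rw [sum_binomPmf, sum_betaBinPmf (by omega)]
  linarith [sum_sub_sum_le_half_sum_abs_sub (range_subset_range.mpr hq) hmass]

/-- Let `β ~ BetaBin(m, n+1-k_α, k_α)` with `k_α = ⌊(n+1)α⌋`, let
`Z' ~ Binomial(m, 1-α')` with `α' = k_α/(n+1)`, and let `q` be the `α`-quantile of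
`Binomial(m, 1-α)` (the largest value whose cdf strictly below it is `≤ α`). Then
`P(β < q) ≤ α + d_TV(Binomial(m, 1-α'), BetaBin(m, n+1-k_α, k_α))`, where the total
variation distance is half the `ℓ¹` distance between the pmfs on `{0,...,m}`. -/
theorem quantile_shift_tv_bound (n m : ℕ) (α : ℝ) (hα : α ∈ Set.Ioo (0 : ℝ) 1) (q : ℕ)
    (hq1 : ∑ k ∈ Finset.range q, binomPmf m (1 - α) k ≤ α)
    (hq2 : ∀ r : ℕ, (∑ k ∈ Finset.range r, binomPmf m (1 - α) k) ≤ α → r ≤ q) :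
    ∑ k ∈ Finset.range q,
        betaBinPmf m (n + 1 - ⌊((n : ℝ) + 1) * α⌋₊) ⌊((n : ℝ) + 1) * α⌋₊ k
      ≤ α + (1 / 2) * ∑ k ∈ Finset.range (m + 1),
          |binomPmf m (1 - (⌊((n : ℝ) + 1) * α⌋₊ : ℝ) / ((n : ℝ) + 1)) k -
            betaBinPmf m (n + 1 - ⌊((n : ℝ) + 1) * α⌋₊) ⌊((n : ℝ) + 1) * α⌋₊ k| :=
  quantile_shift_tv_bound_general n m α hα q hq1
end
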